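/- Let G be a graph on an even number n of vertices v_0,…,v_{n−1}, and construct G' by adding n new vertices c_0,…,c_{n−1} together with the edges (v_i,c_i), (v_i,c_{i+1}), and (c_i,c_{i+1}) for all i, indices taken mod n. Then v_0 c_1 v_1 c_2 v_2 … c_{n−1} v_{n−1} c_0 is a Hamiltonian path of G' starting at v_0; consequently, the minimal length of a walk in G' starting at v_0 that visits every vertex of G' is exactly 2n − 1. -/

import Mathlib

/-!
Listing `v_i, c_{i+1}` for `i = 0, …, n - 1` gives exactly `v_0 c_1 v_1 … v_{n-1} c_0`, and each
consecutive pair in this list is an edge `(v_i, c_{i+1})` or `(c_{i+1}, v_{i+1})` of `G'`, so it is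
the support of a walk. The list has length `2n` and contains all `2n` vertices of `G'`, hence the
walk is Hamiltonian of length `2n - 1`. Conversely a covering walk visits `2n` distinct vertices,
so it has at least `2n - 1` edges.
-/

namespace Stmt7

variable {n : ℕ} [NeZero n]

/-- Vertices of `G'`: the original vertices `v_0,…,v_{n-1}` (left) and the new vertices
`c_0,…,c_{n-1}` (right). -/
abbrev V' (n : ℕ) := Fin n ⊕ Fin n

/-- The base edge relation of `G'`: the edges of `G`, plus `(v_i,c_i)`, `(v_i,c_{i+1})`
and `(c_i,c_{i+1})` for all `i` (indices mod `n`). -/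
def rel (G : SimpleGraph (Fin n)) : V' n → V' n → Prop
  | .inl i, .inl j => G.Adj i j
  | .inl i, .inr j => j = i ∨ j = i + 1
  | .inr i, .inr j => j = i + 1
  | _, _ => False

/-- The graph `G'` built from `G`. -/
def G' (G : SimpleGraph (Fin n)) : SimpleGraph (V' n) := SimpleGraph.fromRel (rel G)

open Fin.NatCast in
/-- The vertex sequence `v_0, c_1, v_1, c_2, v_2, …, c_{n-1}, v_{n-1}, c_0`. -/
def hamList (n : ℕ) [NeZero n] : List (V' n) :=
  Sum.inl 0 ::
    (((List.range (n - 1)).flatMap fun i =>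
      [Sum.inr ((i + 1 : ℕ) : Fin n), Sum.inl ((i + 1 : ℕ) : Fin n)])
    ++ [Sum.inr 0])

end Stmt7

namespace List
variable {α : Type*}

theorem isChain_flatMap_range_pair {R : α → α → Prop} {f g : ℕ → α}
    (hfg : ∀ i, R (f i) (g i)) (hgf : ∀ i, R (g i) (f (i + 1))) (m : ℕ) :
    ((range m).flatMap fun i => [f i, g i]).IsChain R := by
  rw [flatMap_def, isChain_flatten (by simp), isChain_map, isChain_range]
  simp [hfg, hgf]

theorem flatMap_range_succ_pair (f g : ℕ → α) (m : ℕ) :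
    (range (m + 1)).flatMap (fun i => [f i, g i]) =
      f 0 :: (range m).flatMap (fun i => [g i, f (i + 1)]) ++ [g m] := by
  induction m with
  | zero => simp
  | succ m ih => rw [range_succ, flatMap_append, ih, range_succ]; simp

end List

namespace SimpleGraph.Walk
variable {V : Type*} [Fintype V] {G : SimpleGraph V} {u v : V}

theorem card_le_length_add_one {W : G.Walk u v} (hW : ∀ x, x ∈ W.support) :
    Fintype.card V ≤ W.length + 1 := by
  classical
  calc Fintype.card V ≤ W.support.toFinset.card :=
        Finset.card_le_card fun x _ => List.mem_toFinset.mpr (hW x)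
    _ ≤ W.length + 1 := W.length_support ▸ W.support.toFinset_card_le

theorem isHamiltonian_of_forall_mem_support [DecidableEq V] {W : G.Walk u v}
    (hW : ∀ x, x ∈ W.support) (hlen : W.support.length = Fintype.card V) : W.IsHamiltonian :=
  isHamiltonian_iff_support_get_bijective.mpr <|
    (Fintype.bijective_iff_surjective_and_card _).mpr
      ⟨List.get_surjective_iff.mpr hW, by simp [hlen]⟩

end SimpleGraph.Walk

namespace Stmt7
open Fin.NatCast
variable {n : ℕ} [NeZero n]

theorem G'_adj_inl_inr (G : SimpleGraph (Fin n)) (i : Fin n) :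
    (G' G).Adj (.inl i) (.inr (i + 1)) :=
  (SimpleGraph.fromRel_adj _ _ _).mpr ⟨by simp, .inl (.inr rfl)⟩

theorem G'_adj_inr_inl (G : SimpleGraph (Fin n)) (i : Fin n) :
    (G' G).Adj (.inr i) (.inl i) :=
  (SimpleGraph.fromRel_adj _ _ _).mpr ⟨by simp, .inr (.inl rfl)⟩

theorem hamList_eq_flatMap :
    hamList n =
      (List.range n).flatMap fun i => [.inl (i : Fin n), .inr ((i + 1 : ℕ) : Fin n)] := by
  obtain ⟨m, rfl⟩ : ∃ m, n = m + 1 := Nat.exists_eq_add_one.mpr (NeZero.pos n)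
  rw [List.flatMap_range_succ_pair]
  simp [hamList]

theorem isChain_hamList (G : SimpleGraph (Fin n)) : (hamList n).IsChain (G' G).Adj := by
  rw [hamList_eq_flatMap]
  refine List.isChain_flatMap_range_pair (fun i => ?_) (fun i => ?_) n
  · simpa using G'_adj_inl_inr G i
  · exact G'_adj_inr_inl G _

theorem mem_hamList (v : V' n) : v ∈ hamList n := by
  rw [hamList_eq_flatMap, List.mem_flatMap]
  rcases v with j | j
  · exact ⟨j, by simp, by simp⟩
  · exact ⟨(j - 1 : Fin n), by simp, by simp⟩

theorem length_hamList : (hamList n).length = 2 * n := by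
  simp [hamList_eq_flatMap, mul_comm]

theorem exists_walk_support_eq_hamList (G : SimpleGraph (Fin n)) :
    ∃ P : (G' G).Walk (.inl 0) (.inr 0), P.support = hamList n := by
  have hne : hamList n ≠ [] := List.cons_ne_nil _ _
  exact ⟨(SimpleGraph.Walk.ofSupport _ hne (isChain_hamList G)).copy
    (by simp [hamList]) (by simp [hamList]), by simp⟩

end Stmt7

open Stmt7 in
theorem static_coverage_of_Gprime_general (n : ℕ) [NeZero n]
    (G : SimpleGraph (Fin n)) :
    (∃ P : (G' G).Walk (Sum.inl 0) (Sum.inr 0), P.IsHamiltonian ∧ P.support = hamList n) ∧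
    IsLeast {L : ℕ | ∃ (w : V' n) (W : (G' G).Walk (Sum.inl 0) w),
        (∀ v : V' n, v ∈ W.support) ∧ W.length = L} (2 * n - 1) := by
  obtain ⟨P, hP⟩ := exists_walk_support_eq_hamList G
  have hcard : Fintype.card (V' n) = 2 * n := by simp [two_mul]
  have hcover : ∀ v, v ∈ P.support := hP ▸ mem_hamList
  have hlen : P.length = 2 * n - 1 := by
    have := P.length_support
    rw [hP, length_hamList] at this
    omega
  refine ⟨⟨P, P.isHamiltonian_of_forall_mem_support hcover ?_, hP⟩,
    ⟨_, P, hcover, hlen⟩, ?_⟩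
  · rw [hP, length_hamList, hcard]
  · rintro _ ⟨w, W, hW, rfl⟩
    have := W.card_le_length_add_one hW
    omega

open Stmt7 in
/-- For any `G` on an even number `n` of vertices,
`v_0 c_1 v_1 c_2 … c_{n-1} v_{n-1} c_0` is a Hamiltonian path of `G'` starting at `v_0`;
consequently the minimal length of a covering walk of `G'` from `v_0` is exactly
`2n - 1`. -/
theorem static_coverage_of_Gprime (n : ℕ) [NeZero n] (hn : Even n)
    (G : SimpleGraph (Fin n)) :
    (∃ P : (G' G).Walk (Sum.inl 0) (Sum.inr 0), P.IsHamiltonian ∧ P.support = hamList n) ∧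
    IsLeast {L : ℕ | ∃ (w : V' n) (W : (G' G).Walk (Sum.inl 0) w),
        (∀ v : V' n, v ∈ W.support) ∧ W.length = L} (2 * n - 1) :=
  static_coverage_of_Gprime_general n G
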